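/- Let φ : A → B be a continuous 3-homomorphism between Banach algebras. Then the second adjoint φ** : A** → B** is a 3-homomorphism with respect to the first Arens product on both biduals: φ**(F ◁ G ◁ H) = φ**(F) ◁ φ**(G) ◁ φ**(H) for all F, G, H ∈ A**. -/
import Mathlib


open ContinuousLinearMap

variable {A : Type*} [NonUnitalNormedRing A] [NormedSpace ℂ A]
  [SMulCommClass ℂ A A] [IsScalarTower ℂ A A] [CompleteSpace A]

/-- `ξ ↦ (x ↦ ξ·x)` where `⟨ξ·x, y⟩ = ⟨ξ, x * y⟩`, as a continuous bilinear map. -/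
noncomputable def dualRActCLM : (A →L[ℂ] ℂ) →L[ℂ] A →L[ℂ] (A →L[ℂ] ℂ) :=
  (((ContinuousLinearMap.compSL A A ℂ (RingHom.id ℂ) (RingHom.id ℂ)).flip).comp
    (ContinuousLinearMap.mul ℂ A)).flip

/-- The left action of the bidual on the dual, `⟨G·ξ, x⟩ = ⟨G, ξ·x⟩`, continuous
linear in `ξ`. -/
noncomputable def bidualLActCLM (G : (A →L[ℂ] ℂ) →L[ℂ] ℂ) :
    (A →L[ℂ] ℂ) →L[ℂ] (A →L[ℂ] ℂ) :=
  (ContinuousLinearMap.compSL A (A →L[ℂ] ℂ) ℂ (RingHom.id ℂ) (RingHom.id ℂ) G).comp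
    dualRActCLM

/-- The first Arens product on the bidual: `⟨F ◁ G, ξ⟩ = ⟨F, G·ξ⟩`. -/
noncomputable def arens1 (F G : (A →L[ℂ] ℂ) →L[ℂ] ℂ) : (A →L[ℂ] ℂ) →L[ℂ] ℂ :=
  F.comp (bidualLActCLM G)

/-- The adjoint of a continuous linear map, as a continuous linear map between duals. -/
noncomputable def adjCLM {A B : Type*} [NonUnitalNormedRing A] [NormedSpace ℂ A]
    [NonUnitalNormedRing B] [NormedSpace ℂ B] (φ : A →L[ℂ] B) :
    (B →L[ℂ] ℂ) →L[ℂ] (A →L[ℂ] ℂ) :=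
  (ContinuousLinearMap.compSL A B ℂ (RingHom.id ℂ) (RingHom.id ℂ)).flip φ

/-- The second adjoint `φ** : A** → B**`. -/
noncomputable def bidualMap {A B : Type*} [NonUnitalNormedRing A] [NormedSpace ℂ A]
    [NonUnitalNormedRing B] [NormedSpace ℂ B] (φ : A →L[ℂ] B)
    (F : (A →L[ℂ] ℂ) →L[ℂ] ℂ) : (B →L[ℂ] ℂ) →L[ℂ] ℂ :=
  F.comp (adjCLM φ)


lemma dualRActCLM_apply (ξ : A →L[ℂ] ℂ) (x y : A) :
    dualRActCLM ξ x y = ξ (x * y) := rfl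

lemma bidualLActCLM_apply (G : (A →L[ℂ] ℂ) →L[ℂ] ℂ) (ξ : A →L[ℂ] ℂ) (x : A) :
    bidualLActCLM G ξ x = G (dualRActCLM ξ x) := rfl

lemma arens1_apply (F G : (A →L[ℂ] ℂ) →L[ℂ] ℂ) (ξ : A →L[ℂ] ℂ) :
    arens1 F G ξ = F (bidualLActCLM G ξ) := rfl

lemma adjCLM_apply {B : Type*} [NonUnitalNormedRing B] [NormedSpace ℂ B]
    (φ : A →L[ℂ] B) (ξ : B →L[ℂ] ℂ) (x : A) : adjCLM φ ξ x = ξ (φ x) := rfl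

lemma bidualMap_apply {B : Type*} [NonUnitalNormedRing B] [NormedSpace ℂ B]
    (φ : A →L[ℂ] B) (F : (A →L[ℂ] ℂ) →L[ℂ] ℂ) (ξ : B →L[ℂ] ℂ) :
    bidualMap φ F ξ = F (adjCLM φ ξ) := rfl

/-- For a continuous 3-homomorphism `φ : A → B` between Banach algebras,
`φ**` is a 3-homomorphism for the first Arens products. -/
theorem stmt11 {B : Type*} [NonUnitalNormedRing B] [NormedSpace ℂ B]
    [SMulCommClass ℂ B B] [IsScalarTower ℂ B B] [CompleteSpace B]
    (φ : A →L[ℂ] B)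
    (h3 : ∀ x y z : A, φ (x * y * z) = φ x * φ y * φ z)
    (F G H : (A →L[ℂ] ℂ) →L[ℂ] ℂ) :
    bidualMap φ (arens1 (arens1 F G) H) =
      arens1 (arens1 (bidualMap φ F) (bidualMap φ G)) (bidualMap φ H) := by
  ext ξ
  simp only [bidualMap_apply, arens1_apply]
  congr 1
  ext x
  simp only [bidualLActCLM_apply, adjCLM_apply, bidualMap_apply]
  congr 1
  ext y
  simp only [dualRActCLM_apply, bidualLActCLM_apply, adjCLM_apply, bidualMap_apply]
  congr 1
  ext z
  simp only [dualRActCLM_apply, adjCLM_apply, mul_assoc]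
  rw [← mul_assoc x, ← mul_assoc (φ x), h3]
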